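/- Deterministic core of Theorem 1(c) (coarsening for K < K₀): Let n ≥ 1 be an integer, d : {1,…,n}² → ℝ symmetric, and let {G₁,…,G_{K₀}} be a partition of {1,…,n} into K₀ nonempty groups that is d-separated. Then, for every choice of tie-breaking at each step and for every integer K with 1 ≤ K < K₀, the partition {G₁,…,G_{K₀}} is a refinement of the HAC partition P^{n−K} into K clusters. -/

import Mathlib

/-!
While HAC has more clusters than there are groups, every cluster lies inside a single group:
by pigeonhole two clusters share a group, and separation makes their complete linkage smaller
than the linkage of any two clusters from different groups, so a minimizing merge never joins
different groups. After `n - K₀` merges there are `K₀` clusters, each inside a group, so by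
counting they are exactly the groups; every later merge only coarsens the partition.
-/

open Finset

/-- Complete-linkage dissimilarity `Δ(S,S') = max_{i ∈ S, j ∈ S'} d i j`, as an
extended real (so that the value over an empty index set is `⊥`). -/
noncomputable def cLink {n : ℕ} (d : Fin n → Fin n → ℝ) (S S' : Finset (Fin n)) : EReal :=
  sSup {x : EReal | ∃ i ∈ S, ∃ j ∈ S', x = (d i j : EReal)}

/-- Within-cluster dissimilarity `Δ(C) = max_{i,j ∈ C, i ≠ j} d i j`, as an extended real;
for a singleton (or empty) cluster the value is `⊥`, which is smaller than every real. -/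
noncomputable def cDiam {n : ℕ} (d : Fin n → Fin n → ℝ) (C : Finset (Fin n)) : EReal :=
  sSup {x : EReal | ∃ i ∈ C, ∃ j ∈ C, i ≠ j ∧ x = (d i j : EReal)}

/-- The initial partition of `{1,…,n}` into `n` singleton clusters. -/
def singletonPartition (n : ℕ) : Finset (Finset (Fin n)) :=
  Finset.univ.image fun i : Fin n => ({i} : Finset (Fin n))

/-- `Q` is obtained from `P` by merging one pair of distinct clusters attaining the
minimum of the complete-linkage dissimilarity `Δ` over all pairs of distinct clusters. -/
def IsMergeStep {n : ℕ} (d : Fin n → Fin n → ℝ) (P Q : Finset (Finset (Fin n))) : Prop :=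
  ∃ C ∈ P, ∃ C' ∈ P, C ≠ C' ∧
    (∀ D ∈ P, ∀ D' ∈ P, D ≠ D' → cLink d C C' ≤ cLink d D D') ∧
    Q = insert (C ∪ C') ((P.erase C).erase C')

/-- A run of the complete-linkage HAC algorithm (with an arbitrary choice of
tie-breaking at each step): `P 0` is the singleton partition and for every
`r < n - 1`, `P (r+1)` is obtained from `P r` by a merge step. -/
def IsHACChain {n : ℕ} (d : Fin n → Fin n → ℝ) (P : ℕ → Finset (Finset (Fin n))) : Prop :=
  P 0 = singletonPartition n ∧ ∀ r, r < n - 1 → IsMergeStep d (P r) (P (r + 1))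

/-- `G` is a partition of `{1,…,n}` into `K₀` nonempty groups. -/
def IsGroupPartition {n K₀ : ℕ} (G : Fin K₀ → Finset (Fin n)) : Prop :=
  (∀ k, (G k).Nonempty) ∧ (∀ i : Fin n, ∃ k, i ∈ G k) ∧
    ∀ k k' : Fin K₀, k ≠ k' → Disjoint (G k) (G k')

/-- The partition `G` is `d`-separated: every within-group distance is strictly smaller
than every between-group distance (vacuously true when `K₀ = 1`). -/
def IsSeparated {n K₀ : ℕ} (d : Fin n → Fin n → ℝ) (G : Fin K₀ → Finset (Fin n)) : Prop :=
  ∀ k : Fin K₀, ∀ i ∈ G k, ∀ j ∈ G k, i ≠ j →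
    ∀ k₁ k₂ : Fin K₀, k₁ ≠ k₂ → ∀ a ∈ G k₁, ∀ b ∈ G k₂, d i j < d a b

/-- `A` is a refinement of `B`: every element of `A` is a subset of some element of `B`. -/
def IsRefinement {n : ℕ} (A B : Finset (Finset (Fin n))) : Prop :=
  ∀ C ∈ A, ∃ D ∈ B, C ⊆ D

structure IsClustering {α : Type*} (P : Finset (Finset α)) : Prop where
  nonempty : ∀ C ∈ P, C.Nonempty
  cover : ∀ a, ∃ C ∈ P, a ∈ C
  pairwiseDisjoint : (P : Set (Finset α)).PairwiseDisjoint id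

namespace IsClustering

variable {α : Type*} {P : Finset (Finset α)}

lemma eq_of_mem_of_mem (hP : IsClustering P) {C D : Finset α} (hC : C ∈ P) (hD : D ∈ P)
    {a : α} (haC : a ∈ C) (haD : a ∈ D) : C = D :=
  hP.pairwiseDisjoint.elim hC hD (Finset.not_disjoint_iff.2 ⟨a, haC, haD⟩)

variable [DecidableEq α] {C C' : Finset α}

lemma union_notMem_erase_erase (hP : IsClustering P) (hC : C ∈ P) :
    C ∪ C' ∉ (P.erase C).erase C' := by
  intro h
  obtain ⟨a, ha⟩ := hP.nonempty C hC
  have hne : C ∪ C' ≠ C := ne_of_mem_erase (mem_of_mem_erase h)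
  exact hne (hP.eq_of_mem_of_mem (mem_of_mem_erase (mem_of_mem_erase h)) hC
    (mem_union_left _ ha) ha)

lemma merge (hP : IsClustering P) (hC : C ∈ P) (hC' : C' ∈ P) :
    IsClustering (insert (C ∪ C') ((P.erase C).erase C')) := by
  have hsub : ↑((P.erase C).erase C') ⊆ (P : Set (Finset α)) := fun D hD =>
    mem_of_mem_erase (mem_of_mem_erase hD)
  refine ⟨?_, fun a => ?_, ?_⟩
  · intro D hD
    rcases mem_insert.1 hD with rfl | hD
    · exact (hP.nonempty C hC).mono subset_union_left
    · exact hP.nonempty D (hsub hD)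
  · obtain ⟨D, hD, haD⟩ := hP.cover a
    by_cases hDC : D = C
    · exact ⟨_, mem_insert_self _ _, mem_union_left _ (hDC ▸ haD)⟩
    by_cases hDC' : D = C'
    · exact ⟨_, mem_insert_self _ _, mem_union_right _ (hDC' ▸ haD)⟩
    exact ⟨D, mem_insert_of_mem (mem_erase.2 ⟨hDC', mem_erase.2 ⟨hDC, hD⟩⟩), haD⟩
  · rw [coe_insert]
    refine (hP.pairwiseDisjoint.subset hsub).insert fun D hD _ => ?_
    have hDC' : C' ≠ D := (ne_of_mem_erase hD).symm
    have hDC : C ≠ D := (ne_of_mem_erase (mem_of_mem_erase hD)).symm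
    exact disjoint_union_left.2 ⟨hP.pairwiseDisjoint hC (hsub hD) hDC,
      hP.pairwiseDisjoint hC' (hsub hD) hDC'⟩

lemma card_merge (hP : IsClustering P) (hC : C ∈ P) (hC' : C' ∈ P) (hne : C ≠ C') :
    (insert (C ∪ C') ((P.erase C).erase C')).card + 1 = P.card := by
  have htwo : 1 < P.card := one_lt_card.2 ⟨C, hC, C', hC', hne⟩
  rw [card_insert_of_notMem (hP.union_notMem_erase_erase hC),
    card_erase_of_mem (mem_erase.2 ⟨hne.symm, hC'⟩), card_erase_of_mem hC]
  omega

end IsClustering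

lemma isClustering_singletonPartition (n : ℕ) : IsClustering (singletonPartition n) where
  nonempty := by simp [singletonPartition]
  cover i := ⟨{i}, by simp [singletonPartition], mem_singleton_self i⟩
  pairwiseDisjoint := by
    rintro _ hC _ hD hne
    simp only [singletonPartition, coe_image, coe_univ, Set.image_univ, Set.mem_range] at hC hD
    obtain ⟨i, rfl⟩ := hC
    obtain ⟨j, rfl⟩ := hD
    exact disjoint_singleton.2 fun h => hne (h ▸ rfl)

lemma card_singletonPartition (n : ℕ) : (singletonPartition n).card = n := by
  rw [singletonPartition, card_image_of_injective _ singleton_injective, card_univ,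
    Fintype.card_fin]

variable {n : ℕ}

lemma IsRefinement.trans {A B C : Finset (Finset (Fin n))} (hAB : IsRefinement A B)
    (hBC : IsRefinement B C) : IsRefinement A C := fun X hX =>
  let ⟨Y, hY, hXY⟩ := hAB X hX
  let ⟨Z, hZ, hYZ⟩ := hBC Y hY
  ⟨Z, hZ, hXY.trans hYZ⟩

lemma IsRefinement.exists_ne_subset_of_card_lt {A B : Finset (Finset (Fin n))}
    (h : IsRefinement A B) (hcard : B.card < A.card) :
    ∃ C ∈ A, ∃ C' ∈ A, C ≠ C' ∧ ∃ D ∈ B, C ⊆ D ∧ C' ⊆ D := by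
  choose f hfB hf using h
  obtain ⟨⟨C, hC⟩, ⟨C', hC'⟩, hne, heq⟩ := Fintype.exists_ne_map_eq_of_card_lt
    (fun X : A => (⟨f X.1 X.2, hfB X.1 X.2⟩ : B)) (by simpa using hcard)
  have heq : f C hC = f C' hC' := congrArg Subtype.val heq
  exact ⟨C, hC, C', hC', fun h => hne (Subtype.ext h), f C hC, hfB C hC, hf C hC,
    heq ▸ hf C' hC'⟩

lemma IsClustering.isRefinement_of_card_le {P B : Finset (Finset (Fin n))} (hP : IsClustering P)
    (hB : IsClustering B) (h : IsRefinement P B) (hcard : P.card ≤ B.card) :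
    IsRefinement B P := by
  choose f hfB hf using h
  have hf_eq : ∀ C hC i, i ∈ C → ∀ D ∈ B, i ∈ D → f C hC = D := fun C hC i hi D hD hiD =>
    hB.eq_of_mem_of_mem (hfB C hC) hD (hf C hC hi) hiD
  have hsurj : ∀ D ∈ B, ∃ C hC, f C hC = D := fun D hD => by
    obtain ⟨i, hi⟩ := hB.nonempty D hD
    obtain ⟨C, hC, hiC⟩ := hP.cover i
    exact ⟨C, hC, hf_eq C hC i hiC D hD hi⟩
  have hinj := inj_on_of_surj_on_of_card_le f hfB hsurj hcard
  intro D hD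
  obtain ⟨C, hC, rfl⟩ := hsurj D hD
  refine ⟨C, hC, fun j hj => ?_⟩
  obtain ⟨C', hC', hjC'⟩ := hP.cover j
  rwa [← hinj hC hC' (hf_eq C' hC' j hjC' _ (hfB C hC) hj).symm] at hjC'

variable {K₀ : ℕ} {G : Fin K₀ → Finset (Fin n)}

lemma IsGroupPartition.injective (hG : IsGroupPartition G) : Function.Injective G := by
  intro k k' h
  by_contra hne
  obtain ⟨i, hi⟩ := hG.1 k
  exact disjoint_left.1 (hG.2.2 k k' hne) hi (h ▸ hi)

lemma IsGroupPartition.card_image (hG : IsGroupPartition G) : (univ.image G).card = K₀ := by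
  rw [card_image_of_injective _ hG.injective, card_univ, Fintype.card_fin]

lemma IsGroupPartition.isClustering (hG : IsGroupPartition G) : IsClustering (univ.image G) where
  nonempty := by simpa using hG.1
  cover i := by simpa using hG.2.1 i
  pairwiseDisjoint := by
    rintro _ hD _ hD' hne
    simp only [coe_image, coe_univ, Set.image_univ, Set.mem_range] at hD hD'
    obtain ⟨k, rfl⟩ := hD
    obtain ⟨k', rfl⟩ := hD'
    exact hG.2.2 k k' fun h => hne (h ▸ rfl)

lemma le_cLink (d : Fin n → Fin n → ℝ) {S S' : Finset (Fin n)} {i j : Fin n}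
    (hi : i ∈ S) (hj : j ∈ S') : (d i j : EReal) ≤ cLink d S S' :=
  le_sSup ⟨i, hi, j, hj, rfl⟩

lemma exists_cLink_eq (d : Fin n → Fin n → ℝ) {S S' : Finset (Fin n)}
    (hS : S.Nonempty) (hS' : S'.Nonempty) :
    ∃ i ∈ S, ∃ j ∈ S', cLink d S S' = (d i j : EReal) := by
  have hfin : {x : EReal | ∃ i ∈ S, ∃ j ∈ S', x = (d i j : EReal)}.Finite := by
    refine (Set.finite_range fun p : Fin n × Fin n => (d p.1 p.2 : EReal)).subset ?_
    rintro x ⟨i, -, j, -, rfl⟩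
    exact ⟨(i, j), rfl⟩
  obtain ⟨i, hi⟩ := hS
  obtain ⟨j, hj⟩ := hS'
  have hne : {x : EReal | ∃ i ∈ S, ∃ j ∈ S', x = (d i j : EReal)}.Nonempty :=
    ⟨_, i, hi, j, hj, rfl⟩
  exact hne.csSup_mem hfin

lemma cLink_lt_cLink_of_isSeparated {d : Fin n → Fin n → ℝ} (hsep : IsSeparated d G)
    {A B C C' : Finset (Fin n)} {k k₁ k₂ : Fin K₀} (hA : A ⊆ G k) (hB : B ⊆ G k)
    (hAB : Disjoint A B) (hAn : A.Nonempty) (hBn : B.Nonempty) (hC : C ⊆ G k₁)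
    (hC' : C' ⊆ G k₂) (hCn : C.Nonempty) (hC'n : C'.Nonempty) (hk : k₁ ≠ k₂) :
    cLink d A B < cLink d C C' := by
  obtain ⟨i, hi, j, hj, hAB_eq⟩ := exists_cLink_eq d hAn hBn
  obtain ⟨a, ha⟩ := hCn
  obtain ⟨b, hb⟩ := hC'n
  have hij : i ≠ j := fun h => disjoint_left.1 hAB hi (h ▸ hj)
  rw [hAB_eq]
  exact (EReal.coe_lt_coe_iff.2 (hsep k i (hA hi) j (hB hj) hij k₁ k₂ hk a (hC ha) b (hC' hb)))
    |>.trans_le (le_cLink d ha hb)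

variable {d : Fin n → Fin n → ℝ} {P Q : Finset (Finset (Fin n))}

lemma IsMergeStep.isRefinement (hm : IsMergeStep d P Q) : IsRefinement P Q := by
  obtain ⟨C, -, C', -, -, -, rfl⟩ := hm
  intro D hD
  by_cases hDC : D = C
  · exact ⟨_, mem_insert_self _ _, hDC ▸ subset_union_left⟩
  by_cases hDC' : D = C'
  · exact ⟨_, mem_insert_self _ _, hDC' ▸ subset_union_right⟩
  exact ⟨D, mem_insert_of_mem (mem_erase.2 ⟨hDC', mem_erase.2 ⟨hDC, hD⟩⟩), subset_rfl⟩

lemma IsMergeStep.isRefinement_groups_of_card_lt (hsep : IsSeparated d G)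
    (hP : IsClustering P) (href : IsRefinement P (univ.image G))
    (hcard : (univ.image G).card < P.card) (hm : IsMergeStep d P Q) :
    IsRefinement Q (univ.image G) := by
  have hgroup : ∀ C ∈ P, ∃ k, C ⊆ G k := fun C hC => by
    obtain ⟨_, hD, hCD⟩ := href C hC
    obtain ⟨k, -, rfl⟩ := mem_image.1 hD
    exact ⟨k, hCD⟩
  obtain ⟨A, hA, B, hB, hAB, D, hD, hAD, hBD⟩ := href.exists_ne_subset_of_card_lt hcard
  obtain ⟨k, -, rfl⟩ := mem_image.1 hD
  obtain ⟨C, hC, C', hC', hne, hmin, rfl⟩ := hm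
  obtain ⟨k₁, hk₁⟩ := hgroup C hC
  obtain ⟨k₂, hk₂⟩ := hgroup C' hC'
  have hk : k₁ = k₂ := by
    by_contra hk
    exact (hmin A hA B hB hAB).not_gt <| cLink_lt_cLink_of_isSeparated hsep hAD hBD
      (hP.pairwiseDisjoint hA hB hAB) (hP.nonempty A hA) (hP.nonempty B hB) hk₁ hk₂
      (hP.nonempty C hC) (hP.nonempty C' hC') hk
  intro X hX
  rcases mem_insert.1 hX with rfl | hX
  · exact ⟨G k₁, mem_image_of_mem _ (mem_univ _), union_subset hk₁ (hk ▸ hk₂)⟩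
  · exact href X (mem_of_mem_erase (mem_of_mem_erase hX))

namespace IsHACChain

variable {P : ℕ → Finset (Finset (Fin n))}

lemma isClustering_and_card (hP : IsHACChain d P) :
    ∀ r ≤ n - 1, IsClustering (P r) ∧ (P r).card = n - r
  | 0, _ => by
    rw [hP.1]
    exact ⟨isClustering_singletonPartition n, card_singletonPartition n⟩
  | r + 1, hr => by
    obtain ⟨hcl, hcard⟩ := hP.isClustering_and_card r (by omega)
    obtain ⟨C, hC, C', hC', hne, -, hQ⟩ := hP.2 r (by omega)
    have := hcl.card_merge hC hC' hne
    rw [hQ]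
    exact ⟨hcl.merge hC hC', by omega⟩

lemma isRefinement_of_le (hP : IsHACChain d P) {r s : ℕ} (hrs : r ≤ s) (hs : s ≤ n - 1) :
    IsRefinement (P r) (P s) := by
  induction s, hrs using Nat.le_induction with
  | base => exact fun C hC => ⟨C, hC, subset_rfl⟩
  | succ s _ ih => exact (ih (by omega)).trans (hP.2 s (by omega)).isRefinement

lemma isRefinement_groups (hP : IsHACChain d P) (hG : IsGroupPartition G)
    (hsep : IsSeparated d G) (hK₀ : 0 < K₀) :
    ∀ r ≤ n - K₀, IsRefinement (P r) (univ.image G)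
  | 0, _ => by
    rw [hP.1]
    intro C hC
    obtain ⟨i, -, rfl⟩ := mem_image.1 hC
    obtain ⟨k, hk⟩ := hG.2.1 i
    exact ⟨G k, mem_image_of_mem _ (mem_univ _), singleton_subset_iff.2 hk⟩
  | r + 1, hr => by
    obtain ⟨hcl, hcard⟩ := hP.isClustering_and_card r (by omega)
    exact (hP.2 r (by omega)).isRefinement_groups_of_card_lt hsep hcl
      (hP.isRefinement_groups hG hsep hK₀ r (by omega)) (by rw [hG.card_image, hcard]; omega)

end IsHACChain

theorem hac_coarsening_below_general {n K₀ : ℕ}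
    (d : Fin n → Fin n → ℝ)
    (G : Fin K₀ → Finset (Fin n)) (hG : IsGroupPartition G)
    (hsep : IsSeparated d G)
    (P : ℕ → Finset (Finset (Fin n))) (hP : IsHACChain d P)
    (K : ℕ) (hK₁ : 1 ≤ K) (hK₂ : K < K₀) :
    IsRefinement (Finset.univ.image G) (P (n - K)) := by
  obtain ⟨hclust, hcard⟩ := hP.isClustering_and_card (n - K₀) (by omega)
  have hgroups : IsRefinement (univ.image G) (P (n - K₀)) :=
    hclust.isRefinement_of_card_le hG.isClustering
      (hP.isRefinement_groups hG hsep (by omega) _ le_rfl) (by rw [hcard, hG.card_image]; omega)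
  exact hgroups.trans (hP.isRefinement_of_le (by omega) (by omega))

/-- **Deterministic core of Theorem 1(c).** If the group partition is `d`-separated, then
for every tie-breaking and every integer `K` with `1 ≤ K < K₀`, the group partition is a
refinement of the HAC partition into `K` clusters. -/
theorem hac_coarsening_below {n K₀ : ℕ} (hn : 1 ≤ n)
    (d : Fin n → Fin n → ℝ) (hsym : ∀ i j, d i j = d j i)
    (G : Fin K₀ → Finset (Fin n)) (hG : IsGroupPartition G)
    (hsep : IsSeparated d G)
    (P : ℕ → Finset (Finset (Fin n))) (hP : IsHACChain d P)
    (K : ℕ) (hK₁ : 1 ≤ K) (hK₂ : K < K₀) :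
    IsRefinement (Finset.univ.image G) (P (n - K)) :=
  hac_coarsening_below_general d G hG hsep P hP K hK₁ hK₂
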